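/- arXiv:2311.17886 — 2 statements merged into one kernel-verified Lean document; each statement's English description precedes it below -/
import Mathlib

section
/- Let F, G be maps from paths in ℝ^d (started at 0) to paths in ℝ^t (started at 0) that are regular, i.e. there are linear maps H₁, H₂ : T(ℝ^t) → T(ℝ^d) with ⟨σ(F(X)), x⟩ = ⟨σ(X), H₁x⟩ and ⟨σ(G(X)), x⟩ = ⟨σ(X), H₂x⟩ for all paths X and x ∈ T(ℝ^t). Then the map X ↦ F(X) ⊔ G(X) is regular, with corresponding linear map x ↦ Σ_{x=uv} H₁(u) ⧢ H₂(v), where the sum runs over all deconcatenation splittings of x into prefix u and suffix v: ⟨σ(F(X)⊔G(X)), x⟩ = ⟨σ(X), Σ_{x=uv} H₁(u) ⧢ H₂(v)⟩ for all X and x. -/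
open scoped BigOperators TensorProduct

namespace PathVarieties

/-- Words over an alphabet `α`; the letters `{1,…,d}` of `ℝ^d` correspond to `α = Fin d`. -/
abbrev Word (α : Type*) := List α

/-- The tensor algebra `T(ℝ^d)`, identified with the free real vector space on words. -/
abbrev TA (α : Type*) := Word α →₀ ℝ

/-- The list of all (riffle) shuffles of two words. -/
def shuffles {α : Type*} : Word α → Word α → List (Word α)
  | [], v => [v]
  | a :: u, [] => [a :: u]
  | a :: u, b :: v =>
      ((shuffles u (b :: v)).map (a :: ·)) ++ ((shuffles (a :: u) v).map (b :: ·))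
termination_by u v => u.length + v.length
decreasing_by all_goals (simp only [List.length_cons]; omega)

/-- Shuffle product of two words, as an element of `T(ℝ^d)`. -/
noncomputable def shw {α : Type*} (u v : Word α) : TA α :=
  ((shuffles u v).map fun w => Finsupp.single w (1 : ℝ)).sum

/-- The shuffle product `⧢` on `T(ℝ^d)`, the bilinear extension of the shuffle of words. -/
noncomputable def sh {α : Type*} (x y : TA α) : TA α :=
  x.sum fun u cu => y.sum fun v cv => (cu * cv) • shw u v

/-- Right halfshuffle `u ≻ v` of words (`v` nonempty): shuffle `u` with `v` minus its
last letter, then append the last letter of `v`.  (This is the unique bilinear operation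
with `w ≻ a = wa` and `w ≻ (va) = (w≻v + v≻w)a`.) -/
noncomputable def rshw {α : Type*} (u v : Word α) : TA α :=
  ((shuffles u v.dropLast).map fun w =>
    Finsupp.single (w ++ v.drop (v.length - 1)) (1 : ℝ)).sum

/-- Right halfshuffle `≻` on `T^{≥1}(ℝ^d)`, extended bilinearly. -/
noncomputable def rsh {α : Type*} (x y : TA α) : TA α :=
  x.sum fun u cu => y.sum fun v cv => (cu * cv) • rshw u v

/-- Left halfshuffle `u ≺ v` of words (`u` nonempty): the first letter of `u` followed by
the shuffle of the rest of `u` with `v`.  (This is the unique bilinear operation with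
`a ≺ w = aw` and `(av) ≺ w = a(w≺v + v≺w)`.) -/
noncomputable def lshw {α : Type*} (u v : Word α) : TA α :=
  ((shuffles u.tail v).map fun w => Finsupp.single (u.take 1 ++ w) (1 : ℝ)).sum

/-- Left halfshuffle `≺` on `T^{≥1}(ℝ^d)`, extended bilinearly. -/
noncomputable def lsh {α : Type*} (x y : TA α) : TA α :=
  x.sum fun u cu => y.sum fun v cv => (cu * cv) • lshw u v

/-- The antipode `𝒜`, with `𝒜(i₁⋯iₙ) = (−1)ⁿ iₙ⋯i₁`. -/
noncomputable def antipode {α : Type*} (x : TA α) : TA α :=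
  x.sum fun w c => Finsupp.single w.reverse (((-1 : ℝ) ^ w.length) * c)

/-- Helper for `Λ_B`: value on a reversed word. -/
noncomputable def lamRev {α β : Type*} (B : α → TA β) : Word α → TA β
  | [] => Finsupp.single [] 1
  | [i] => B i
  | i :: w => rsh (lamRev B w) (B i)

/-- `Λ_B` on a word: `Λ_B e = e`, `Λ_B i = B i`, `Λ_B (w·i) = (Λ_B w) ≻ (Λ_B i)`. -/
noncomputable def lamW {α β : Type*} (B : α → TA β) (w : Word α) : TA β :=
  lamRev B w.reverse

/-- The linear map `Λ_B : T(ℝ^t) → T(ℝ^d)` induced by `B` on letters. -/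
noncomputable def Lam {α β : Type*} (B : α → TA β) (x : TA α) : TA β :=
  x.sum fun w c => c • lamW B w

/-- `splitEmb e j n w = Σ_{w = u₁⋯uₙ} e_j(u₁) ⧢ e_{j+1}(u₂) ⧢ ⋯ ⧢ e_{j+n−1}(uₙ)`,
the sum over all splittings of `w` into `n` consecutive (possibly empty) factors,
each factor relabelled letterwise by `e`. -/
noncomputable def splitEmb {α β : Type*} (e : ℕ → α → β) : ℕ → ℕ → Word α → TA β
  | _, 0, w => if w.isEmpty then Finsupp.single ([] : Word β) (1 : ℝ) else 0
  | j, k + 1, w => ∑ m ∈ Finset.range (w.length + 1),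
      sh (Finsupp.single ((w.take m).map (e j)) (1 : ℝ)) (splitEmb e (j + 1) k (w.drop m))

/-- `Σ_{x=uv} f(u)·v`: deconcatenate, evaluate the functional `f` on prefixes. -/
noncomputable def leftAct {α : Type*} (f : Word α → ℝ) (x : TA α) : TA α :=
  x.sum fun w c => c • ∑ k ∈ Finset.range (w.length + 1),
    f (w.take k) • Finsupp.single (w.drop k) (1 : ℝ)

/-- `Σ_{x=uv} u·f(v)`: deconcatenate, evaluate the functional `f` on suffixes. -/
noncomputable def rightAct {α : Type*} (f : Word α → ℝ) (x : TA α) : TA α :=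
  x.sum fun w c => c • ∑ k ∈ Finset.range (w.length + 1),
    f (w.drop k) • Finsupp.single (w.take k) (1 : ℝ)

/-- A raw path: a time horizon `T` together with a map `ℝ → ℝ^α`
(only the restriction to `[0,T]` is relevant). -/
structure RawPath (α : Type*) where
  T : ℝ
  toFun : ℝ → α → ℝ

/-- A path: positive time horizon, continuous on `[0,T]` and piecewise continuously
differentiable there (witnessed by a partition `0 = τ₀ < τ₁ < ⋯ < τₙ = T`). -/
def IsPath {α : Type*} (X : RawPath α) : Prop :=
  0 < X.T ∧ (∀ i, ContinuousOn (fun t => X.toFun t i) (Set.Icc 0 X.T)) ∧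
    ∃ (n : ℕ) (τ : Fin (n + 1) → ℝ), StrictMono τ ∧ τ 0 = 0 ∧ τ (Fin.last n) = X.T ∧
      ∀ (k : Fin n) (i : α), ContDiffOn ℝ 1 (fun t => X.toFun t i)
        (Set.Icc (τ k.castSucc) (τ k.succ))

/-- Iterated integrals, by recursion on the reversed word:
`sigRev X (i :: w) t = ∫₀ᵗ ⟨σ(X)ₛ, w.reverse⟩ dX⁽ⁱ⁾(s)`. -/
noncomputable def sigRev {α : Type*} (X : ℝ → α → ℝ) : Word α → ℝ → ℝ
  | [], _ => 1
  | i :: w, t => ∫ s in (0 : ℝ)..t, sigRev X w s * deriv (fun u => X u i) s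

/-- `⟨σ(X)_t, w⟩`, the iterated-integrals signature of `X` stopped at time `t`. -/
noncomputable def sigUpTo {α : Type*} (X : RawPath α) (t : ℝ) (w : Word α) : ℝ :=
  sigRev X.toFun w.reverse t

/-- `⟨σ(X), w⟩`, the iterated-integrals signature of the path `X` at a word `w`. -/
noncomputable def sig {α : Type*} (X : RawPath α) (w : Word α) : ℝ :=
  sigUpTo X X.T w

/-- Pairing of a word-indexed functional with an element of `T(ℝ^d)`. -/
noncomputable def pairF {α : Type*} (f : Word α → ℝ) (x : TA α) : ℝ :=
  x.sum fun w c => c * f w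

/-- `⟨σ(X), x⟩` for a tensor `x ∈ T(ℝ^d)` (linear in `x`). -/
noncomputable def pair {α : Type*} (X : RawPath α) (x : TA α) : ℝ :=
  Finsupp.linearCombination ℝ (sig X) x

/-- The path variety `𝒱(W)` of all paths whose signature kills every element of `W`. -/
def V {α : Type*} (W : Set (TA α)) : Set (RawPath α) :=
  {X | IsPath X ∧ ∀ x ∈ W, pair X x = 0}

/-- `ℐ(M)`, the space of tensors killed by the signature of every path in `M`. -/
noncomputable def Idl {α : Type*} (M : Set (RawPath α)) : Submodule ℝ (TA α) :=
  ⨅ X ∈ M, LinearMap.ker (Finsupp.linearCombination ℝ (sig X))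

/-- Concatenation `X ⊔ Y` of paths. -/
noncomputable def concat {α : Type*} (X Y : RawPath α) : RawPath α where
  T := X.T + Y.T
  toFun := fun t i =>
    if t ≤ X.T then X.toFun t i else Y.toFun (t - X.T) i + X.toFun X.T i - Y.toFun 0 i

/-- Time reversal `⟵X`. -/
def timeRev {α : Type*} (X : RawPath α) : RawPath α :=
  ⟨X.T, fun t i => X.toFun (X.T - t) i⟩

/-- `concatIter X n = X^{⊔(n+1)}`. -/
noncomputable def concatIter {α : Type*} (X : RawPath α) : ℕ → RawPath α
  | 0 => X
  | n + 1 => concat (concatIter X n) X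

/-- `X^{⊔n}`, the `n`-fold concatenation of `X` with itself (intended for `n ≥ 1`). -/
noncomputable def concatPow {α : Type*} (X : RawPath α) (n : ℕ) : RawPath α :=
  concatIter X (n - 1)

/-- `concatFold f k = f 0 ⊔ f 1 ⊔ ⋯ ⊔ f k`. -/
noncomputable def concatFold {α : Type*} (f : ℕ → RawPath α) : ℕ → RawPath α
  | 0 => f 0
  | k + 1 => concat (concatFold f k) (f (k + 1))

/-- The deconcatenation coproduct `Δ : T(ℝ^d) → T(ℝ^d) ⊗ T(ℝ^d)`,
`Δw = Σ_{w=uv} u ⊗ v`. -/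
noncomputable def deconc {α : Type*} (x : TA α) : TensorProduct ℝ (TA α) (TA α) :=
  x.sum fun w c => c • ∑ k ∈ Finset.range (w.length + 1),
    (Finsupp.single (w.take k) (1 : ℝ)) ⊗ₜ[ℝ] (Finsupp.single (w.drop k) (1 : ℝ))

/-!
By Chen's identity, `⟨σ(F X ⊔ G X), w⟩ = Σ_{w=uv} ⟨σ(F X), u⟩⟨σ(G X), v⟩`; regularity turns each
factor into `⟨σ(X), H₁ u⟩` resp. `⟨σ(X), H₂ v⟩`, and the shuffle identity
`⟨σ(X), a⟩⟨σ(X), b⟩ = ⟨σ(X), a ⧢ b⟩` merges the two factors into `⟨σ(X), H₁ u ⧢ H₂ v⟩`.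
Both identities come from the iterated-integral definition of the signature. For Chen's identity
the integral defining the last letter is split at the junction time; for the shuffle identity the
two sides are compared through their derivatives, which agree away from the finitely many points
where the path fails to be `C¹`.
-/

section Shuffles

variable {α : Type*}

@[simp]
lemma shuffles_nil_left (v : Word α) : shuffles [] v = [v] := by
  rw [shuffles]

@[simp]
lemma shuffles_nil_right (u : Word α) : shuffles u [] = [u] := by
  cases u <;> rw [shuffles]

lemma shuffles_cons_cons (a b : α) (u v : Word α) :
    shuffles (a :: u) (b :: v) =
      (shuffles u (b :: v)).map (a :: ·) ++ (shuffles (a :: u) v).map (b :: ·) := by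
  rw [shuffles]

lemma coe_shuffles_cons_cons (a b : α) (u v : Word α) :
    (shuffles (a :: u) (b :: v) : Multiset (Word α)) =
      Multiset.map (a :: ·) (shuffles u (b :: v)) +
        Multiset.map (b :: ·) (shuffles (a :: u) v) := by
  rw [shuffles_cons_cons, ← Multiset.coe_add, Multiset.map_coe, Multiset.map_coe]

theorem coe_shuffles_append_singleton : ∀ (u v : Word α) (a b : α),
    (shuffles (u ++ [a]) (v ++ [b]) : Multiset (Word α)) =
      Multiset.map (· ++ [a]) (shuffles u (v ++ [b])) +
        Multiset.map (· ++ [b]) (shuffles (u ++ [a]) v)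
  | [], [], a, b => by
    simp [coe_shuffles_cons_cons, add_comm]
  | [], c :: v, a, b => by
    simp only [List.nil_append, List.cons_append, coe_shuffles_cons_cons]
    rw [← List.nil_append [a], coe_shuffles_append_singleton [] v a b]
    simp only [shuffles_nil_left, Multiset.coe_singleton, Multiset.map_singleton,
      Multiset.map_add, Multiset.map_map, Function.comp_def, List.cons_append, List.nil_append,
      List.append_assoc]
    abel
  | c :: u, [], a, b => by
    simp only [List.nil_append, List.cons_append, coe_shuffles_cons_cons]
    rw [← List.nil_append [b], coe_shuffles_append_singleton u [] a b]
    simp only [shuffles_nil_right, Multiset.coe_singleton, Multiset.map_singleton,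
      Multiset.map_add, Multiset.map_map, Function.comp_def, List.cons_append, List.nil_append,
      List.append_assoc]
    abel
  | c :: u, d :: v, a, b => by
    simp only [List.cons_append, coe_shuffles_cons_cons]
    rw [← List.cons_append, coe_shuffles_append_singleton u (d :: v) a b, ← List.cons_append,
      coe_shuffles_append_singleton (c :: u) v a b]
    simp only [Multiset.map_add, Multiset.map_map, Function.comp_def, List.cons_append]
    abel
termination_by u v => u.length + v.length

theorem coe_shuffles_reverse : ∀ u v : Word α,
    Multiset.map List.reverse (shuffles u v) = (shuffles u.reverse v.reverse : Multiset (Word α))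
  | [], v => by simp
  | a :: u, [] => by simp
  | a :: u, b :: v => by
    have hu := coe_shuffles_reverse u (b :: v)
    have hv := coe_shuffles_reverse (a :: u) v
    rw [List.reverse_cons] at hu hv ⊢
    rw [List.reverse_cons, coe_shuffles_append_singleton, ← hu, ← hv, coe_shuffles_cons_cons]
    simp [Function.comp_def]
termination_by u v => u.length + v.length

end Shuffles

section Calculus

open MeasureTheory Set

lemma _root_.ContDiffOn.intervalIntegrable_deriv {f : ℝ → ℝ} {a b : ℝ} (hab : a < b)
    (hf : ContDiffOn ℝ 1 f (Icc a b)) : IntervalIntegrable (deriv f) volume a b := by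
  have hcont : ContinuousOn (derivWithin f (Icc a b)) (Icc a b) :=
    hf.continuousOn_derivWithin (uniqueDiffOn_Icc hab) le_rfl
  rw [intervalIntegrable_iff_integrableOn_Ioo_of_le hab.le]
  refine (hcont.integrableOn_Icc.mono_set Ioo_subset_Icc_self).congr_fun (fun x hx => ?_)
    measurableSet_Ioo
  exact derivWithin_of_mem_nhds (Icc_mem_nhds hx.1 hx.2)

lemma eqOn_of_hasDerivAt_off_countable {f g f' : ℝ → ℝ} {a b : ℝ} {E : Set ℝ}
    (hE : E.Countable) (hf : ContinuousOn f (Icc a b)) (hg : ContinuousOn g (Icc a b))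
    (hf' : ∀ x ∈ Ioo a b \ E, HasDerivAt f (f' x) x)
    (hg' : ∀ x ∈ Ioo a b \ E, HasDerivAt g (f' x) x) (ha : f a = g a) :
    EqOn f g (Icc a b) := by
  intro t ht
  have hsub : Ioo a t \ E ⊆ Ioo a b \ E := sdiff_subset_sdiff_left (Ioo_subset_Ioo_right ht.2)
  have h := integral_eq_of_hasDerivAt_off_countable_of_le (f - g) 0 ht.1 hE
    ((hf.sub hg).mono (Icc_subset_Icc_right ht.2))
    (fun x hx => by simpa using (hf' x (hsub hx)).sub (hg' x (hsub hx))) intervalIntegrable_const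
  simp only [Pi.zero_apply, intervalIntegral.integral_zero, Pi.sub_apply] at h
  linarith

lemma hasDerivAt_list_sum {ι : Type*} (l : List ι) {f : ι → ℝ → ℝ} {f' : ι → ℝ} {x : ℝ}
    (h : ∀ w ∈ l, HasDerivAt (f w) (f' w) x) :
    HasDerivAt (fun s => (l.map (f · s)).sum) (l.map f').sum x := by
  induction l with
  | nil => exact hasDerivAt_const x 0
  | cons w l ih =>
    simp only [List.map_cons, List.sum_cons]
    exact (h w List.mem_cons_self).add (ih fun v hv => h v (List.mem_cons_of_mem w hv))

end Calculus

section IteratedIntegrals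

open MeasureTheory Set

variable {α : Type*}

noncomputable def coordDeriv (X : RawPath α) (i : α) : ℝ → ℝ :=
  deriv fun u => X.toFun u i

lemma sigRev_cons (X : RawPath α) (i : α) (w : Word α) (t : ℝ) :
    sigRev X.toFun (i :: w) t = ∫ s in (0 : ℝ)..t, sigRev X.toFun w s * coordDeriv X i s :=
  rfl

lemma sigRev_cons_zero (X : RawPath α) (i : α) (w : Word α) :
    sigRev X.toFun (i :: w) 0 = 0 := by
  rw [sigRev_cons, intervalIntegral.integral_same]

namespace IsPath

variable {X : RawPath α}

lemma intervalIntegrable_coordDeriv (hX : IsPath X) (i : α) :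
    IntervalIntegrable (coordDeriv X i) volume 0 X.T := by
  obtain ⟨-, -, n, τ, hτ, hτ0, hτT, hC1⟩ := hX
  have hpartial : ∀ j : Fin (n + 1), IntervalIntegrable (coordDeriv X i) volume 0 (τ j) := by
    intro j
    induction j using Fin.induction with
    | zero => rw [hτ0]
    | succ k ih =>
      exact ih.trans ((hC1 k i).intervalIntegrable_deriv (hτ Fin.castSucc_lt_succ))
  simpa [hτT] using hpartial (Fin.last n)

lemma exists_countable_continuousAt_coordDeriv (hX : IsPath X) :
    ∃ E : Set ℝ, E.Countable ∧
      ∀ t ∈ Ioo 0 X.T \ E, ∀ i, ContinuousAt (coordDeriv X i) t := by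
  obtain ⟨-, -, n, τ, hτ, hτ0, hτT, hC1⟩ := hX
  refine ⟨range τ, (finite_range τ).countable, fun t ht i => ?_⟩
  have hpiece : ∀ j : Fin (n + 1), t < τ j →
      ∃ k : Fin n, t ∈ Ioo (τ k.castSucc) (τ k.succ) := by
    intro j
    induction j using Fin.induction with
    | zero => exact fun h => absurd ht.1.1 (by rw [← hτ0]; exact h.not_gt)
    | succ k ih =>
      intro htk
      rcases lt_trichotomy t (τ k.castSucc) with h | h | h
      · exact ih h
      · exact absurd ⟨_, h.symm⟩ ht.2
      · exact ⟨k, h, htk⟩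
  obtain ⟨k, hk⟩ := hpiece (Fin.last n) (hτT ▸ ht.1.2)
  exact ((hC1 k i).mono Ioo_subset_Icc_self).continuousOn_deriv_of_isOpen isOpen_Ioo le_rfl
    |>.continuousAt (isOpen_Ioo.mem_nhds hk)

lemma intervalIntegrable_mul_coordDeriv (hX : IsPath X) {g : ℝ → ℝ}
    (hg : ContinuousOn g (Icc 0 X.T)) (i : α) {a b : ℝ} (ha : a ∈ Icc 0 X.T)
    (hb : b ∈ Icc 0 X.T) : IntervalIntegrable (fun s => g s * coordDeriv X i s) volume a b := by
  rw [← uIcc_of_le hX.1.le] at ha hb hg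
  exact ((hX.intervalIntegrable_coordDeriv i).mono_set (uIcc_subset_uIcc ha hb)).continuousOn_mul
    (hg.mono (uIcc_subset_uIcc ha hb))

lemma continuousOn_sigRev (hX : IsPath X) (w : Word α) :
    ContinuousOn (sigRev X.toFun w) (Icc 0 X.T) := by
  induction w with
  | nil => exact continuousOn_const
  | cons i w ih =>
    have hint := hX.intervalIntegrable_mul_coordDeriv ih i (left_mem_Icc.2 hX.1.le)
      (right_mem_Icc.2 hX.1.le)
    have := intervalIntegral.continuousOn_primitive_interval' hint left_mem_uIcc
    rwa [uIcc_of_le hX.1.le] at this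

lemma hasDerivAt_sigRev_cons (hX : IsPath X) {E : Set ℝ}
    (hE : ∀ t ∈ Ioo 0 X.T \ E, ∀ i, ContinuousAt (coordDeriv X i) t) (i : α) (w : Word α)
    {t : ℝ} (ht : t ∈ Ioo 0 X.T \ E) :
    HasDerivAt (sigRev X.toFun (i :: w)) (sigRev X.toFun w t * coordDeriv X i t) t := by
  have hcont := hX.continuousOn_sigRev w
  have hint := hX.intervalIntegrable_mul_coordDeriv hcont i (left_mem_Icc.2 hX.1.le)
    (right_mem_Icc.2 hX.1.le)
  exact intervalIntegral.integral_hasDerivAt_right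
    (hX.intervalIntegrable_mul_coordDeriv hcont i (left_mem_Icc.2 hX.1.le)
      (Ioo_subset_Icc_self ht.1))
    ⟨Ioo 0 X.T, isOpen_Ioo.mem_nhds ht.1,
      (hint.1.mono_set Ioo_subset_Ioc_self).aestronglyMeasurable⟩
    ((hcont.continuousAt (Icc_mem_nhds ht.1.1 ht.1.2)).mul (hE t ht i))

theorem sigRev_mul_sigRev (hX : IsPath X) : ∀ u v : Word α,
    EqOn (fun t => sigRev X.toFun u t * sigRev X.toFun v t)
      (fun t => ((shuffles u v).map (sigRev X.toFun · t)).sum) (Icc 0 X.T)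
  | [], v => fun t _ => by simp [sigRev]
  | a :: u, [] => fun t _ => by simp [sigRev]
  | a :: u, b :: v => by
    obtain ⟨E, hEc, hE⟩ := hX.exists_countable_continuousAt_coordDeriv
    have ihu := hX.sigRev_mul_sigRev u (b :: v)
    have ihv := hX.sigRev_mul_sigRev (a :: u) v
    have hD := hX.hasDerivAt_sigRev_cons hE
    refine eqOn_of_hasDerivAt_off_countable hEc
      ((hX.continuousOn_sigRev _).mul (hX.continuousOn_sigRev _))
      (continuousOn_list_sum _ fun w _ => hX.continuousOn_sigRev w)
      (fun x hx => (hD a u hx).mul (hD b v hx)) (fun x hx => ?_)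
      (by simp [shuffles_cons_cons, Function.comp_def, sigRev_cons_zero])
    simp only [shuffles_cons_cons, List.map_append, List.sum_append, List.map_map,
      Function.comp_def]
    refine ((hasDerivAt_list_sum _ fun w _ => hD a w hx).add
      (hasDerivAt_list_sum _ fun w _ => hD b w hx)).congr_deriv ?_
    have hu := ihu (Ioo_subset_Icc_self hx.1)
    have hv := ihv (Ioo_subset_Icc_self hx.1)
    beta_reduce at hu hv
    rw [List.sum_map_mul_right, List.sum_map_mul_right, ← hu, ← hv]
    ring
termination_by u v => u.length + v.length

theorem sig_mul_sig (hX : IsPath X) (u v : Word α) :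
    sig X u * sig X v = ((shuffles u v).map (sig X)).sum := calc
  sig X u * sig X v = ((shuffles u.reverse v.reverse).map (sigRev X.toFun · X.T)).sum :=
    hX.sigRev_mul_sigRev _ _ (right_mem_Icc.2 hX.1.le)
  _ = ((shuffles u v).map (sig X)).sum := by
    rw [← Multiset.sum_coe, ← Multiset.map_coe, ← coe_shuffles_reverse, Multiset.map_map]
    rfl

end IsPath

end IteratedIntegrals

section Pairing

variable {α : Type*}

lemma pair_single (X : RawPath α) (w : Word α) (c : ℝ) :
    pair X (Finsupp.single w c) = c * sig X w := by
  simp [pair]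

lemma pair_sum {ι : Type*} (X : RawPath α) (s : Finset ι) (x : ι → TA α) :
    pair X (∑ k ∈ s, x k) = ∑ k ∈ s, pair X (x k) :=
  map_sum (Finsupp.linearCombination ℝ (sig X)) x s

variable {X : RawPath α}

lemma IsPath.pair_shw (hX : IsPath X) (u v : Word α) : pair X (shw u v) = sig X u * sig X v := by
  rw [hX.sig_mul_sig, shw, pair, map_list_sum, List.map_map]
  congr 1
  exact List.map_congr_left fun w _ => by simp

theorem IsPath.pair_sh (hX : IsPath X) (x y : TA α) :
    pair X (sh x y) = pair X x * pair X y := by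
  have hshw (u v : Word α) : Finsupp.linearCombination ℝ (sig X) (shw u v) = sig X u * sig X v :=
    hX.pair_shw u v
  simp only [sh, pair, map_finsuppSum, map_smul, hshw, Finsupp.linearCombination_apply,
    smul_eq_mul]
  rw [Finsupp.sum_mul]
  refine Finsupp.sum_congr fun u _ => ?_
  rw [Finsupp.mul_sum]
  exact Finsupp.sum_congr fun v _ => by ring

lemma pair_eq_of_sig_eq {β : Type*} {Y : RawPath β} (H : TA β →ₗ[ℝ] TA α)
    (h : ∀ w, sig Y w = pair X (H (Finsupp.single w 1))) (x : TA β) :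
    pair Y x = pair X (H x) := by
  have hH : Finsupp.linearCombination ℝ (sig Y) = Finsupp.linearCombination ℝ (sig X) ∘ₗ H :=
    Finsupp.lhom_ext' fun w => LinearMap.ext_ring (by simpa [pair] using h w)
  exact LinearMap.congr_fun hH x

end Pairing

section Chen

open MeasureTheory Set

variable {α : Type*} {P Q : RawPath α}

lemma sigUpTo_nil (X : RawPath α) (t : ℝ) : sigUpTo X t [] = 1 := rfl

lemma sigUpTo_append_singleton (X : RawPath α) (w : Word α) (i : α) (t : ℝ) :
    sigUpTo X t (w ++ [i]) = ∫ s in (0 : ℝ)..t, sigUpTo X s w * coordDeriv X i s := by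
  simp only [sigUpTo, List.reverse_append, List.reverse_singleton, List.singleton_append,
    sigRev_cons]

lemma IsPath.continuousOn_sigUpTo {X : RawPath α} (hX : IsPath X) (w : Word α) :
    ContinuousOn (sigUpTo X · w) (Icc 0 X.T) :=
  hX.continuousOn_sigRev w.reverse

lemma coordDeriv_concat_of_lt (i : α) {s : ℝ} (hs : s < P.T) :
    coordDeriv (concat P Q) i s = coordDeriv P i s := by
  refine Filter.EventuallyEq.deriv_eq ?_
  filter_upwards [Iio_mem_nhds hs] with u hu
  simp only [concat, if_pos (mem_Iio.1 hu).le]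

lemma coordDeriv_concat_of_gt (i : α) {s : ℝ} (hs : P.T < s) :
    coordDeriv (concat P Q) i s = coordDeriv Q i (s - P.T) := by
  have heq : (fun u => (concat P Q).toFun u i)
      =ᶠ[nhds s] fun u => Q.toFun (u - P.T) i + (P.toFun P.T i - Q.toFun 0 i) := by
    filter_upwards [Ioi_mem_nhds hs] with u hu
    simp only [concat, if_neg (not_le.2 (mem_Ioi.1 hu))]
    ring
  rw [coordDeriv, heq.deriv_eq, deriv_add_const]
  exact deriv_comp_sub_const (f := fun r => Q.toFun r i) P.T s

lemma sigUpTo_concat_of_le (w : Word α) {s : ℝ} (hs : s ∈ Icc 0 P.T) :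
    sigUpTo (concat P Q) s w = sigUpTo P s w := by
  induction w using List.reverseRecOn generalizing s with
  | nil => rfl
  | append_singleton w i ih =>
    rw [sigUpTo_append_singleton, sigUpTo_append_singleton]
    refine intervalIntegral.integral_congr_Ioo_of_le hs.1 fun x hx => ?_
    have hxP : x < P.T := hx.2.trans_le hs.2
    rw [ih ⟨hx.1.le, hxP.le⟩, coordDeriv_concat_of_lt i hxP]

lemma sum_range_take_drop_append_singleton {M : Type*} [AddCommMonoid M]
    (f : Word α → Word α → M) (w : Word α) (i : α) :
    ∑ k ∈ Finset.range ((w ++ [i]).length + 1), f ((w ++ [i]).take k) ((w ++ [i]).drop k) =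
      ∑ k ∈ Finset.range (w.length + 1), f (w.take k) (w.drop k ++ [i]) + f (w ++ [i]) [] := by
  rw [List.length_append, List.length_singleton, Finset.sum_range_succ, List.take_of_length_le
    (by simp), List.drop_of_length_le (by simp)]
  refine congrArg (· + _) (Finset.sum_congr rfl fun k hk => ?_)
  have hk : k ≤ w.length := Nat.lt_succ_iff.1 (Finset.mem_range.1 hk)
  rw [List.take_append_of_le_length hk, List.drop_append_of_le_length hk]

theorem sigUpTo_concat_add (hP : IsPath P) (hQ : IsPath Q) (w : Word α) {t : ℝ}
    (ht : t ∈ Icc 0 Q.T) :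
    sigUpTo (concat P Q) (P.T + t) w =
      ∑ k ∈ Finset.range (w.length + 1), sig P (w.take k) * sigUpTo Q t (w.drop k) := by
  induction w using List.reverseRecOn generalizing t with
  | nil => simp [sigUpTo_nil, sig]
  | append_singleton w i ih =>
    set f := fun s => sigUpTo (concat P Q) s w * coordDeriv (concat P Q) i s
    set g := fun r => ∑ k ∈ Finset.range (w.length + 1),
      sig P (w.take k) * (sigUpTo Q r (w.drop k) * coordDeriv Q i r)
    have hfP : EqOn f (fun s => sigUpTo P s w * coordDeriv P i s) (Ioo 0 P.T) := fun s hs => by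
      simp only [f, sigUpTo_concat_of_le w (Ioo_subset_Icc_self hs),
        coordDeriv_concat_of_lt i hs.2]
    have hfQ : EqOn f (fun s => g (s - P.T)) (Ioo P.T (P.T + t)) := fun s hs => by
      have hsQ : s - P.T ∈ Icc 0 Q.T := ⟨by linarith [hs.1], by linarith [hs.2, ht.2]⟩
      have hw := ih hsQ
      rw [add_sub_cancel] at hw
      simp only [f, g, hw, coordDeriv_concat_of_gt i hs.1, Finset.sum_mul, mul_assoc]
    have hint (k : ℕ) : IntervalIntegrable
        (fun r => sigUpTo Q r (w.drop k) * coordDeriv Q i r) volume 0 t :=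
      hQ.intervalIntegrable_mul_coordDeriv (hQ.continuousOn_sigUpTo _) i
        (left_mem_Icc.2 hQ.1.le) ht
    have hg : IntervalIntegrable g volume 0 t := by
      simpa [g, Finset.sum_fn] using
        IntervalIntegrable.sum _ fun k _ => (hint k).const_mul (sig P (w.take k))
    have hle : P.T ≤ P.T + t := le_add_of_nonneg_right ht.1
    have hf₁ : IntervalIntegrable f volume 0 P.T :=
      (hP.intervalIntegrable_mul_coordDeriv (hP.continuousOn_sigUpTo w) i
        (left_mem_Icc.2 hP.1.le) (right_mem_Icc.2 hP.1.le)).congr_uIoo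
        (uIoo_of_le hP.1.le ▸ hfP.symm)
    have hf₂ : IntervalIntegrable f volume P.T (P.T + t) := by
      have := hg.comp_sub_right P.T
      rw [zero_add, add_comm] at this
      exact this.congr_uIoo (uIoo_of_le hle ▸ hfQ.symm)
    calc sigUpTo (concat P Q) (P.T + t) (w ++ [i])
        = (∫ s in (0 : ℝ)..P.T, f s) + ∫ s in P.T..P.T + t, f s := by
          rw [sigUpTo_append_singleton, intervalIntegral.integral_add_adjacent_intervals hf₁ hf₂]
      _ = sig P (w ++ [i]) + ∫ r in (0 : ℝ)..t, g r := by
          rw [intervalIntegral.integral_congr_Ioo_of_le hP.1.le hfP,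
            intervalIntegral.integral_congr_Ioo_of_le hle hfQ,
            intervalIntegral.integral_comp_sub_right, sig, sigUpTo_append_singleton, sub_self,
            add_sub_cancel_left]
      _ = ∑ k ∈ Finset.range ((w ++ [i]).length + 1),
            sig P ((w ++ [i]).take k) * sigUpTo Q t ((w ++ [i]).drop k) := by
          rw [sum_range_take_drop_append_singleton (fun u v => sig P u * sigUpTo Q t v),
            sigUpTo_nil, mul_one, add_comm,
            intervalIntegral.integral_finsetSum fun k _ => (hint k).const_mul _]
          simp only [intervalIntegral.integral_const_mul, sigUpTo_append_singleton]

theorem sig_concat (hP : IsPath P) (hQ : IsPath Q) (w : Word α) :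
    sig (concat P Q) w =
      ∑ k ∈ Finset.range (w.length + 1), sig P (w.take k) * sig Q (w.drop k) :=
  sigUpTo_concat_add hP hQ w (right_mem_Icc.2 hQ.1.le)

end Chen

/-- If `F, G` are regular maps on paths started at `0`, with
corresponding linear maps `H₁, H₂`, then `X ↦ F(X) ⊔ G(X)` is regular with
corresponding linear map `x ↦ Σ_{x=uv} H₁(u) ⧢ H₂(v)`. -/
theorem statement14 {d t : ℕ}
    (F G : RawPath (Fin d) → RawPath (Fin t))
    (H₁ H₂ : TA (Fin t) →ₗ[ℝ] TA (Fin d))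
    (hF : ∀ X : RawPath (Fin d), IsPath X → (∀ i, X.toFun 0 i = 0) →
      IsPath (F X) ∧ ∀ j, (F X).toFun 0 j = 0)
    (hG : ∀ X : RawPath (Fin d), IsPath X → (∀ i, X.toFun 0 i = 0) →
      IsPath (G X) ∧ ∀ j, (G X).toFun 0 j = 0)
    (hFH : ∀ X : RawPath (Fin d), IsPath X → (∀ i, X.toFun 0 i = 0) →
      ∀ x : TA (Fin t), pair (F X) x = pair X (H₁ x))
    (hGH : ∀ X : RawPath (Fin d), IsPath X → (∀ i, X.toFun 0 i = 0) →
      ∀ x : TA (Fin t), pair (G X) x = pair X (H₂ x)) :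
    ∃ H₃ : TA (Fin t) →ₗ[ℝ] TA (Fin d),
      (∀ w : Word (Fin t),
        H₃ (Finsupp.single w 1) = ∑ k ∈ Finset.range (w.length + 1),
          sh (H₁ (Finsupp.single (w.take k) 1)) (H₂ (Finsupp.single (w.drop k) 1))) ∧
      ∀ X : RawPath (Fin d), IsPath X → (∀ i, X.toFun 0 i = 0) →
        ∀ x : TA (Fin t), pair (concat (F X) (G X)) x = pair X (H₃ x) := by
  refine ⟨Finsupp.linearCombination ℝ fun w => ∑ k ∈ Finset.range (w.length + 1),
      sh (H₁ (Finsupp.single (w.take k) 1)) (H₂ (Finsupp.single (w.drop k) 1)),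
    fun w => by simp, fun X hX h0 => pair_eq_of_sig_eq _ fun w => ?_⟩
  rw [sig_concat (hF X hX h0).1 (hG X hX h0).1, Finsupp.linearCombination_single, one_smul,
    pair_sum]
  refine Finset.sum_congr rfl fun k _ => ?_
  rw [hX.pair_sh, ← hFH X hX h0, ← hGH X hX h0, pair_single, pair_single, one_mul,
    one_mul]

end PathVarieties
end

section
/- Let W ⊆ T(ℝ^d) and suppose the path variety 𝒱(W) is closed under concatenation: X, Y ∈ 𝒱(W) implies X ⊔ Y ∈ 𝒱(W). Then 𝒱(W) is closed under time reversal: X ∈ 𝒱(W) implies ⟵X ∈ 𝒱(W). (Every algebraic subsemigroup of paths under concatenation is an algebraic subgroup.) -/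
open scoped BigOperators TensorProduct

namespace PathVarieties

/-!
Chen's identity turns concatenation of paths into the convolution product of signatures,
viewed as functionals on words, and time reversal gives the convolution inverse: differentiating
`t ↦ ∑_{w = uv} ⟨σ(X|[0,t]), u⟩ · ⟨σ(⟵(X|[0,t])), v⟩`, the product rule makes consecutive terms
cancel. Write `σ(X) = 1 + A`, where `A` vanishes on the empty word, so that `Aᵏ` vanishes on words
shorter than `k`. For `x ∈ W`, the pairing of `x` with `σ(X^{⊔n}) = ∑ₖ (n choose k) Aᵏ` is then a
polynomial in `n`. It vanishes at every `n ≥ 1` by closure under concatenation, hence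
identically, and its value at `n = -1` is `⟨σ(⟵X), x⟩`, because `σ(⟵X) = (1 + A)⁻¹ = ∑ₖ (-A)ᵏ`.
-/

open Set MeasureTheory Topology Filter

variable {α : Type*}

section Convolution

def counit : Word α → ℝ
  | [] => 1
  | _ :: _ => 0

lemma counit_take_eq_zero {w : Word α} {k : ℕ} (hk : k ≠ 0) (hw : w ≠ []) :
    counit (w.take k) = 0 := by
  obtain ⟨k, rfl⟩ := Nat.exists_eq_succ_of_ne_zero hk
  obtain ⟨a, w, rfl⟩ := List.exists_cons_of_ne_nil hw
  rfl

/-- The convolution `h ↦ f * h` of functionals on words, dual to deconcatenation. -/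
noncomputable def leftConv (f : Word α → ℝ) : Module.End ℝ (Word α → ℝ) where
  toFun h w := ∑ k ∈ Finset.range (w.length + 1), f (w.take k) * h (w.drop k)
  map_add' h h' := by
    ext w; simp only [Pi.add_apply, mul_add, Finset.sum_add_distrib]
  map_smul' c h := by
    ext w; simp only [Pi.smul_apply, smul_eq_mul, RingHom.id_apply, Finset.mul_sum]
    exact Finset.sum_congr rfl fun _ _ => by ring

lemma leftConv_apply (f h : Word α → ℝ) (w : Word α) :
    leftConv f h w = ∑ k ∈ Finset.range (w.length + 1), f (w.take k) * h (w.drop k) := rfl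

lemma leftConv_add (f f' : Word α → ℝ) : leftConv (f + f') = leftConv f + leftConv f' := by
  ext h w
  simp only [leftConv_apply, LinearMap.add_apply, Pi.add_apply, add_mul, Finset.sum_add_distrib]

lemma leftConv_counit : leftConv (counit : Word α → ℝ) = 1 := by
  ext h w
  rw [leftConv_apply, Finset.sum_eq_single 0]
  · simp [counit]
  · intro k _ hk
    rcases eq_or_ne w [] with rfl | hw
    · simp_all
    · rw [counit_take_eq_zero hk hw, zero_mul]
  · simp

lemma leftConv_apply_counit (f : Word α → ℝ) : leftConv f counit = f := by
  ext w
  rw [leftConv_apply, Finset.sum_eq_single w.length]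
  · simp [counit]
  · intro k hk hne
    rw [Finset.mem_range] at hk
    obtain ⟨a, v, hv⟩ := List.exists_cons_of_ne_nil (l := w.drop k)
      (by rw [ne_eq, List.drop_eq_nil_iff]; omega)
    rw [hv, counit, mul_zero]
  · simp

lemma leftConv_pow_apply_eq_zero {A : Word α → ℝ} (hA : A [] = 0) (h : Word α → ℝ) :
    ∀ {k : ℕ} {w : Word α}, w.length < k → (leftConv A ^ k) h w = 0
  | k + 1, w, hw => by
    rw [pow_succ', Module.End.mul_apply, leftConv_apply]
    refine Finset.sum_eq_zero fun j hj => ?_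
    rw [Finset.mem_range] at hj
    rcases Nat.eq_zero_or_pos j with rfl | hj0
    · rw [List.take_zero, hA, zero_mul]
    · rw [leftConv_pow_apply_eq_zero hA h (by simp only [List.length_drop]; omega), mul_zero]

end Convolution

section Pairing

variable {ι : Type*}

lemma pair_eq_pairF (X : RawPath α) (x : TA α) : pair X x = pairF (sig X) x := by
  simp only [pair, pairF, Finsupp.linearCombination_apply, smul_eq_mul]

lemma pairF_congr {f f' : Word α → ℝ} {x : TA α} (h : ∀ w ∈ x.support, f w = f' w) :
    pairF f x = pairF f' x :=
  Finsupp.sum_congr fun w hw => by rw [h w hw]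

lemma pairF_sum (s : Finset ι) (c : ι → ℝ) (f : ι → Word α → ℝ) (x : TA α) :
    pairF (∑ i ∈ s, c i • f i) x = ∑ i ∈ s, c i * pairF (f i) x := by
  simp only [pairF, Finsupp.sum, Finset.sum_apply, Pi.smul_apply, smul_eq_mul, Finset.mul_sum]
  rw [Finset.sum_comm]
  exact Finset.sum_congr rfl fun _ _ => Finset.sum_congr rfl fun _ _ => by ring

end Pairing

lemma descPochhammer_eval_neg_one (k : ℕ) :
    (descPochhammer ℝ k).eval (-1) = (-1) ^ k * k.factorial := by
  induction k with
  | zero => simp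
  | succ k ih =>
    rw [descPochhammer_succ_eval, ih]
    push_cast [Nat.factorial_succ]
    ring

/-- `n ↦ ∑ₖ (n choose k) b k` is a polynomial in `n` vanishing at all positive integers, hence
also at `n = -1`, where `(n choose k) = (-1)^k`. -/
lemma sum_neg_one_pow_mul_eq_zero {b : ℕ → ℝ} {N : ℕ} (hb : ∀ k, N < k → b k = 0)
    (h : ∀ n, 1 ≤ n → ∑ k ∈ Finset.range (n + 1), (n.choose k : ℝ) * b k = 0) :
    ∑ k ∈ Finset.range (N + 1), (-1) ^ k * b k = 0 := by
  set Q : Polynomial ℝ := ∑ k ∈ Finset.range (N + 1),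
    Polynomial.C (b k / k.factorial) * descPochhammer ℝ k
  have hQ : ∀ n : ℕ, Q.eval (n : ℝ) = ∑ k ∈ Finset.range (n + 1), (n.choose k : ℝ) * b k := by
    intro n
    calc Q.eval (n : ℝ) = ∑ k ∈ Finset.range (N + 1), (n.choose k : ℝ) * b k := by
          simp only [Q, Polynomial.eval_finsetSum, Polynomial.eval_mul, Polynomial.eval_C,
            descPochhammer_eval_eq_descFactorial, Nat.descFactorial_eq_factorial_mul_choose]
          refine Finset.sum_congr rfl fun k _ => ?_
          push_cast
          field_simp
      _ = ∑ k ∈ Finset.range (N + n + 1), (n.choose k : ℝ) * b k := by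
          refine Finset.sum_subset (Finset.range_subset_range.2 (by omega)) fun k _ hk => ?_
          rw [Finset.mem_range, not_lt] at hk
          rw [hb k (by omega), mul_zero]
      _ = ∑ k ∈ Finset.range (n + 1), (n.choose k : ℝ) * b k := by
          refine (Finset.sum_subset (Finset.range_subset_range.2 (by omega)) fun k _ hk => ?_).symm
          rw [Finset.mem_range, not_lt] at hk
          rw [Nat.choose_eq_zero_of_lt (by omega), Nat.cast_zero, zero_mul]
  have hQ0 : Q = 0 :=
    Polynomial.eq_zero_of_infinite_isRoot Q <| Set.infinite_of_injective_forall_mem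
      (f := fun n : ℕ => ((n + 1 : ℕ) : ℝ)) (fun m n hmn => by simpa using hmn)
      fun n => (hQ (n + 1)).trans (h _ n.succ_pos)
  have := congrArg (Polynomial.eval (-1)) hQ0
  simp only [Q, Polynomial.eval_finsetSum, Polynomial.eval_mul, Polynomial.eval_C,
    descPochhammer_eval_neg_one, Polynomial.eval_zero] at this
  rw [← this]
  refine Finset.sum_congr rfl fun k _ => ?_
  field_simp

section Inversion

variable {A : Word α → ℝ}

lemma pairF_one_add_leftConv_pow (f : Word α → ℝ) (x : TA α) (n : ℕ) :
    pairF (((1 + leftConv A) ^ n) f) x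
      = ∑ k ∈ Finset.range (n + 1), (n.choose k : ℝ) * pairF ((leftConv A ^ k) f) x := by
  rw [add_comm, (Commute.one_right (leftConv A)).add_pow, ← pairF_sum]
  simp only [one_pow, mul_one, LinearMap.sum_apply]
  congr 1
  refine Finset.sum_congr rfl fun k _ => ?_
  rw [Module.End.mul_apply, Module.End.natCast_apply, map_nsmul, Nat.cast_smul_eq_nsmul]

/-- A Neumann series: `A [] = 0` makes `A^K` vanish on words shorter than `K`. -/
lemma apply_eq_of_one_add_leftConv_apply_eq_counit (hA : A [] = 0) {r : Word α → ℝ}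
    (hr : (1 + leftConv A) r = counit) {K : ℕ} {w : Word α} (hw : w.length < K) :
    r w = (∑ k ∈ Finset.range K, (-1 : ℝ) ^ k • (leftConv A ^ k) counit) w := by
  have hneg : ∀ k, (-leftConv A) ^ k = (-1 : ℝ) ^ k • leftConv A ^ k := fun k => by
    rw [← neg_one_smul ℝ (leftConv A), smul_pow]
  have hgeom := geom_sum_mul_neg (-leftConv A) K
  rw [sub_neg_eq_add] at hgeom
  have := LinearMap.congr_fun hgeom r
  simp only [Module.End.mul_apply, hr, hneg, LinearMap.sum_apply, LinearMap.smul_apply] at this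
  rw [this, LinearMap.sub_apply, LinearMap.smul_apply, Pi.sub_apply, Pi.smul_apply,
    leftConv_pow_apply_eq_zero hA r hw, smul_zero, sub_zero, Module.End.one_apply]

/-- On words of bounded length, `(1 + A)^n = ∑ₖ (n choose k) Aᵏ` is a polynomial in `n`, and
its value at `n = -1` is `r`. -/
theorem pairF_eq_zero_of_forall_pow_eq_zero (hA : A [] = 0) {r : Word α → ℝ}
    (hr : (1 + leftConv A) r = counit) {x : TA α}
    (h : ∀ n, 1 ≤ n → pairF (((1 + leftConv A) ^ n) counit) x = 0) : pairF r x = 0 := by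
  set N := x.support.sup List.length
  have hlen : ∀ w ∈ x.support, w.length ≤ N := fun w hw => Finset.le_sup (f := List.length) hw
  rw [pairF_congr fun w hw => apply_eq_of_one_add_leftConv_apply_eq_counit hA hr
    (Nat.lt_succ_of_le (hlen w hw)), pairF_sum]
  refine sum_neg_one_pow_mul_eq_zero (fun k hk => ?_) fun n hn => ?_
  · refine Finset.sum_eq_zero fun w hw => ?_
    exact mul_eq_zero_of_right _ (leftConv_pow_apply_eq_zero hA _ ((hlen w hw).trans_lt hk))
  · rw [← pairF_one_add_leftConv_pow]
    exact h n hn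

end Inversion

section Partition

lemma rel_zero_last_of_forall_succ {β : Type*} {R : β → β → Prop} (refl : ∀ a, R a a)
    (trans : ∀ {a b c}, R a b → R b c → R a c) {n : ℕ} (τ : Fin (n + 1) → β)
    (h : ∀ k : Fin n, R (τ k.castSucc) (τ k.succ)) : R (τ 0) (τ (Fin.last n)) :=
  Fin.induction (motive := fun j => R (τ 0) (τ j)) (refl _) (fun k hk => trans hk (h k)) _

structure PiecewiseC1 (F : ℝ → α → ℝ) (T : ℝ) where
  n : ℕ
  τ : Fin (n + 1) → ℝ
  strictMono : StrictMono τ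
  τ_zero : τ 0 = 0
  τ_last : τ (Fin.last n) = T
  contDiffOn : ∀ (k : Fin n) (i : α),
    ContDiffOn ℝ 1 (fun t => F t i) (Icc (τ k.castSucc) (τ k.succ))

noncomputable def IsPath.piecewiseC1 {X : RawPath α} (h : IsPath X) :
    PiecewiseC1 X.toFun X.T :=
  ⟨h.2.2.choose, h.2.2.choose_spec.choose, h.2.2.choose_spec.choose_spec.1,
    h.2.2.choose_spec.choose_spec.2.1, h.2.2.choose_spec.choose_spec.2.2.1,
    h.2.2.choose_spec.choose_spec.2.2.2⟩

namespace PiecewiseC1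

variable {F : ℝ → α → ℝ} {T : ℝ} (P : PiecewiseC1 F T)

lemma τ_mem_Icc (j : Fin (P.n + 1)) : P.τ j ∈ Icc 0 T :=
  ⟨le_of_eq_of_le P.τ_zero.symm (P.strictMono.monotone (Fin.zero_le j)),
    le_of_le_of_eq (P.strictMono.monotone (Fin.le_last j)) P.τ_last⟩

lemma nonneg (P : PiecewiseC1 F T) : 0 ≤ T := (P.τ_mem_Icc 0).1.trans (P.τ_mem_Icc 0).2

lemma τ_lt (k : Fin P.n) : P.τ k.castSucc < P.τ k.succ := P.strictMono k.castSucc_lt_succ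

lemma Icc_subset (k : Fin P.n) : Icc (P.τ k.castSucc) (P.τ k.succ) ⊆ Icc 0 T :=
  Icc_subset_Icc (P.τ_mem_Icc _).1 (P.τ_mem_Icc _).2

lemma Ioo_subset (k : Fin P.n) : Ioo (P.τ k.castSucc) (P.τ k.succ) ⊆ Ioo 0 T :=
  Ioo_subset_Ioo (P.τ_mem_Icc _).1 (P.τ_mem_Icc _).2

def PieceContinuous (h : ℝ → ℝ) : Prop :=
  ∀ k : Fin P.n, ∃ g : ℝ → ℝ, Continuous g ∧ EqOn h g (Ioo (P.τ k.castSucc) (P.τ k.succ))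

variable {P}

lemma pieceContinuous_deriv (i : α) : P.PieceContinuous fun s => deriv (fun u => F u i) s := by
  intro k
  have hD := (P.contDiffOn k i).continuousOn_derivWithin (uniqueDiffOn_Icc (P.τ_lt k)) le_rfl
  refine ⟨IccExtend (P.τ_lt k).le ((Icc _ _).domRestrict (derivWithin _ _)),
    (continuousOn_iff_continuous_domRestrict.1 hD).Icc_extend', fun x hx => ?_⟩
  rw [IccExtend_of_mem _ _ (Ioo_subset_Icc_self hx)]
  exact (derivWithin_of_mem_nhds (Icc_mem_nhds hx.1 hx.2)).symm

lemma PieceContinuous.continuousOn_mul {h : ℝ → ℝ} (hh : P.PieceContinuous h) {f : ℝ → ℝ}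
    (hf : ContinuousOn f (Icc 0 T)) : P.PieceContinuous fun s => f s * h s := by
  intro k
  obtain ⟨g, hg, hgh⟩ := hh k
  refine ⟨fun s => IccExtend P.nonneg ((Icc 0 T).domRestrict f) s * g s,
    ((continuousOn_iff_continuous_domRestrict.1 hf).Icc_extend').mul hg, fun x hx => ?_⟩
  dsimp only
  rw [hgh hx, IccExtend_of_mem _ _ (P.Icc_subset k (Ioo_subset_Icc_self hx)),
    domRestrict_apply]

lemma PieceContinuous.intervalIntegrable {h : ℝ → ℝ} (hh : P.PieceContinuous h) {a b : ℝ}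
    (ha : a ∈ Icc 0 T) (hb : b ∈ Icc 0 T) : IntervalIntegrable h volume a b := by
  have hpiece (k : Fin P.n) : IntervalIntegrable h volume (P.τ k.castSucc) (P.τ k.succ) := by
    obtain ⟨g, hg, hgh⟩ := hh k
    refine (hg.intervalIntegrable _ _).congr_ae ?_
    rw [uIoc_of_le (P.τ_lt k).le]
    refine (ae_restrict_iff' measurableSet_Ioc).2 ?_
    filter_upwards [(countable_singleton (P.τ k.succ)).ae_notMem volume] with x hx hxI
    exact (hgh ⟨hxI.1, lt_of_le_of_ne hxI.2 hx⟩).symm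
  have h0T := rel_zero_last_of_forall_succ (R := IntervalIntegrable h volume)
    (fun _ => IntervalIntegrable.refl) IntervalIntegrable.trans P.τ hpiece
  rw [P.τ_zero, P.τ_last] at h0T
  exact h0T.mono_set (by rw [uIcc_of_le P.nonneg]; exact uIcc_subset_Icc ha hb)

lemma PieceContinuous.continuousOn_primitive {h : ℝ → ℝ} (hh : P.PieceContinuous h) :
    ContinuousOn (fun t => ∫ s in (0 : ℝ)..t, h s) (Icc 0 T) := by
  have := intervalIntegral.continuousOn_primitive_interval' (hh.intervalIntegrable
    (left_mem_Icc.2 P.nonneg) (right_mem_Icc.2 P.nonneg)) left_mem_uIcc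
  rwa [uIcc_of_le P.nonneg] at this

lemma PieceContinuous.hasDerivAt_primitive {h : ℝ → ℝ} (hh : P.PieceContinuous h)
    {k : Fin P.n} {x : ℝ} (hx : x ∈ Ioo (P.τ k.castSucc) (P.τ k.succ)) :
    HasDerivAt (fun t => ∫ s in (0 : ℝ)..t, h s) (h x) x := by
  obtain ⟨g, hg, hgh⟩ := hh k
  have hnhds : Ioo (P.τ k.castSucc) (P.τ k.succ) ∈ 𝓝 x := Ioo_mem_nhds hx.1 hx.2
  refine intervalIntegral.integral_hasDerivAt_right
    (hh.intervalIntegrable (left_mem_Icc.2 P.nonneg) (P.Icc_subset k (Ioo_subset_Icc_self hx)))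
    ⟨_, hnhds, hg.aestronglyMeasurable.congr ?_⟩ ?_
  · exact (ae_restrict_iff' measurableSet_Ioo).2 (Eventually.of_forall fun y hy => (hgh hy).symm)
  · exact hg.continuousAt.congr (eventuallyEq_of_mem hnhds hgh).symm

lemma eq_of_hasDerivAt_zero {φ : ℝ → ℝ} (hc : ContinuousOn φ (Icc 0 T))
    (hd : ∀ k : Fin P.n, ∀ x ∈ Ioo (P.τ k.castSucc) (P.τ k.succ), HasDerivAt φ 0 x) :
    φ T = φ 0 := by
  have hpiece (k : Fin P.n) : φ (P.τ k.succ) = φ (P.τ k.castSucc) := by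
    obtain ⟨c, hc, hslope⟩ := exists_hasDerivAt_eq_slope φ (fun _ => 0) (P.τ_lt k)
      (hc.mono (P.Icc_subset k)) (hd k)
    rw [eq_comm, div_eq_zero_iff, sub_eq_zero] at hslope
    exact hslope.resolve_right (sub_ne_zero.2 (P.τ_lt k).ne')
  have := rel_zero_last_of_forall_succ (R := fun a b => φ b = φ a) (fun _ => rfl)
    (fun hab hbc => hbc.trans hab) P.τ hpiece
  rwa [P.τ_zero, P.τ_last] at this

end PiecewiseC1

end Partition

section IteratedIntegrals

variable {F : ℝ → α → ℝ} {T : ℝ}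

lemma sigRev_cons_s19 (F : ℝ → α → ℝ) (i : α) (l : Word α) (t : ℝ) :
    sigRev F (i :: l) t = ∫ s in (0 : ℝ)..t, sigRev F l s * deriv (fun u => F u i) s := rfl

lemma sigRev_zero (F : ℝ → α → ℝ) : ∀ w : Word α, sigRev F w 0 = counit w
  | [] => rfl
  | _ :: _ => intervalIntegral.integral_same

lemma continuousOn_sigRev (P : PiecewiseC1 F T) :
    ∀ l : Word α, ContinuousOn (sigRev F l) (Icc 0 T)
  | [] => continuousOn_const
  | i :: l => (P.pieceContinuous_deriv i |>.continuousOn_mul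
      (continuousOn_sigRev P l)).continuousOn_primitive

lemma hasDerivAt_sigRev_cons (P : PiecewiseC1 F T) (i : α) (l : Word α) {k : Fin P.n} {x : ℝ}
    (hx : x ∈ Ioo (P.τ k.castSucc) (P.τ k.succ)) :
    HasDerivAt (sigRev F (i :: l)) (sigRev F l x * deriv (fun u => F u i) x) x :=
  (P.pieceContinuous_deriv i |>.continuousOn_mul (continuousOn_sigRev P l)).hasDerivAt_primitive hx

/-- `sigFrom F T l t = ⟨σ(F|[t,T]), l⟩`: iterated integrals anchored at the right endpoint. -/
noncomputable def sigFrom (F : ℝ → α → ℝ) (T : ℝ) : Word α → ℝ → ℝ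
  | [], _ => 1
  | i :: l, t => ∫ s in t..T, sigFrom F T l s * deriv (fun u => F u i) s

lemma sigFrom_cons_self (F : ℝ → α → ℝ) (T : ℝ) (i : α) (l : Word α) :
    sigFrom F T (i :: l) T = 0 :=
  intervalIntegral.integral_same

lemma sigFrom_cons_eq_sub (P : PiecewiseC1 F T) (i : α) (l : Word α)
    (hl : ContinuousOn (sigFrom F T l) (Icc 0 T)) {t : ℝ} (ht : t ∈ Icc 0 T) :
    sigFrom F T (i :: l) t = (∫ s in (0 : ℝ)..T, sigFrom F T l s * deriv (fun u => F u i) s)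
      - ∫ s in (0 : ℝ)..t, sigFrom F T l s * deriv (fun u => F u i) s := by
  have hpc := P.pieceContinuous_deriv i |>.continuousOn_mul hl
  exact (intervalIntegral.integral_interval_sub_left
    (hpc.intervalIntegrable (left_mem_Icc.2 P.nonneg) (right_mem_Icc.2 P.nonneg))
    (hpc.intervalIntegrable (left_mem_Icc.2 P.nonneg) ht)).symm

lemma continuousOn_sigFrom (P : PiecewiseC1 F T) :
    ∀ l : Word α, ContinuousOn (sigFrom F T l) (Icc 0 T)
  | [] => continuousOn_const
  | i :: l => by
    refine ContinuousOn.congr (continuousOn_const.sub ?_)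
      fun t ht => sigFrom_cons_eq_sub P i l (continuousOn_sigFrom P l) ht
    exact (P.pieceContinuous_deriv i |>.continuousOn_mul
      (continuousOn_sigFrom P l)).continuousOn_primitive

lemma hasDerivAt_sigFrom_cons (P : PiecewiseC1 F T) (i : α) (l : Word α) {k : Fin P.n} {x : ℝ}
    (hx : x ∈ Ioo (P.τ k.castSucc) (P.τ k.succ)) :
    HasDerivAt (sigFrom F T (i :: l)) (-(sigFrom F T l x * deriv (fun u => F u i) x)) x := by
  have hl := continuousOn_sigFrom P l
  refine (((P.pieceContinuous_deriv i |>.continuousOn_mul hl).hasDerivAt_primitive hx).const_sub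
    (∫ s in (0 : ℝ)..T, sigFrom F T l s * deriv (fun u => F u i) s)).congr_of_eventuallyEq ?_
  filter_upwards [isOpen_Ioo.mem_nhds (P.Ioo_subset k hx)] with t ht
  exact sigFrom_cons_eq_sub P i l hl (Ioo_subset_Icc_self ht)

lemma sigRev_timeRev (F : ℝ → α → ℝ) (T : ℝ) :
    ∀ (l : Word α) (t : ℝ),
      sigRev (fun u j => F (T - u) j) l t = (-1) ^ l.length * sigFrom F T l (T - t)
  | [], _ => by simp [sigRev, sigFrom]
  | i :: l, t => by
    have hintegrand : ∀ s, sigRev (fun u j => F (T - u) j) l s * deriv (fun u => F (T - u) i) s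
        = (-1) ^ (l.length + 1) * (sigFrom F T l (T - s) * deriv (fun u => F u i) (T - s)) :=
      fun s => by
        rw [sigRev_timeRev F T l s, show deriv (fun u => F (T - u) i) s = _ from
          deriv_comp_const_sub (fun v => F v i) T s]
        ring
    simp only [sigRev_cons_s19, hintegrand, intervalIntegral.integral_const_mul,
      intervalIntegral.integral_comp_sub_left
        (fun s => sigFrom F T l s * deriv (fun u => F u i) s) T, sub_zero, List.length_cons]
    rfl

end IteratedIntegrals

section Telescoping

variable {F : ℝ → α → ℝ} {T : ℝ}

lemma sum_range_deriv_mul_add_mul_deriv_eq_zero {n : ℕ} {a b a' b' : ℕ → ℝ} (h₀ : a' 0 = 0)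
    (hn : b' n = 0) (h : ∀ k < n, a' (k + 1) * b (k + 1) + a k * b' k = 0) :
    ∑ k ∈ Finset.range (n + 1), (a' k * b k + a k * b' k) = 0 := by
  rw [Finset.sum_add_distrib, Finset.sum_range_succ', Finset.sum_range_succ (fun k => a k * b' k),
    h₀, hn, zero_mul, mul_zero, add_zero, add_zero, ← Finset.sum_add_distrib]
  exact Finset.sum_eq_zero fun k hk => h k (Finset.mem_range.1 hk)

lemma reverse_take_succ (w : Word α) {k : ℕ} (hk : k < w.length) :
    (w.take (k + 1)).reverse = w[k] :: (w.take k).reverse := by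
  rw [List.take_add_one]
  simp [List.getElem?_eq_getElem hk]

-- The two halves of the product rule cancel between consecutive terms.
lemma hasDerivAt_sum_sigRev_take_mul (P : PiecewiseC1 F T) (w : Word α) {b : ℕ → ℝ → ℝ}
    {j : Fin P.n} {x : ℝ} (hx : x ∈ Ioo (P.τ j.castSucc) (P.τ j.succ))
    (hb : ∀ (k : ℕ) (hk : k < w.length),
      HasDerivAt (b k) (-(b (k + 1) x * deriv (fun u => F u w[k]) x)) x)
    (hbn : HasDerivAt (b w.length) 0 x) :
    HasDerivAt (fun t => ∑ k ∈ Finset.range (w.length + 1),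
      sigRev F (w.take k).reverse t * b k t) 0 x := by
  set a : ℕ → ℝ → ℝ := fun k => sigRev F (w.take k).reverse
  have ha (k : ℕ) (hk : k < w.length) :
      HasDerivAt (a (k + 1)) (a k x * deriv (fun u => F u w[k]) x) x := by
    simp only [a, reverse_take_succ w hk]
    exact hasDerivAt_sigRev_cons P _ _ hx
  have hdiff : ∀ k ∈ Finset.range (w.length + 1),
      HasDerivAt (a k) (deriv (a k) x) x ∧ HasDerivAt (b k) (deriv (b k) x) x := by
    intro k hk
    rw [Finset.mem_range, Nat.lt_succ_iff] at hk
    refine ⟨?_, ?_⟩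
    · rcases k with _ | k
      · exact (hasDerivAt_const x 1).differentiableAt.hasDerivAt
      · exact (ha k hk).differentiableAt.hasDerivAt
    · rcases hk.lt_or_eq with hk | rfl
      · exact (hb k hk).differentiableAt.hasDerivAt
      · exact hbn.differentiableAt.hasDerivAt
  refine (HasDerivAt.fun_sum fun k hk => (hdiff k hk).1.mul (hdiff k hk).2).congr_deriv ?_
  refine sum_range_deriv_mul_add_mul_deriv_eq_zero (a := fun k => a k x) (b := fun k => b k x)
    (a' := fun k => deriv (a k) x) (b' := fun k => deriv (b k) x) (deriv_const x 1) hbn.deriv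
    fun k hk => ?_
  rw [(ha k hk).deriv, (hb k hk).deriv]
  ring

theorem sum_sigRev_take_mul_eq (P : PiecewiseC1 F T) (w : Word α) (b : ℕ → ℝ → ℝ)
    (hbc : ∀ k ≤ w.length, ContinuousOn (b k) (Icc 0 T))
    (hb : ∀ (k : ℕ) (hk : k < w.length) (j : Fin P.n), ∀ x ∈ Ioo (P.τ j.castSucc) (P.τ j.succ),
      HasDerivAt (b k) (-(b (k + 1) x * deriv (fun u => F u w[k]) x)) x)
    (hbn : ∀ x, HasDerivAt (b w.length) 0 x) :
    ∑ k ∈ Finset.range (w.length + 1), sigRev F (w.take k).reverse T * b k T = b 0 0 := by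
  have hconst := P.eq_of_hasDerivAt_zero
    (φ := fun t => ∑ k ∈ Finset.range (w.length + 1), sigRev F (w.take k).reverse t * b k t)
    (continuousOn_finsetSum _ fun k hk => (continuousOn_sigRev P _).mul
      (hbc k (Nat.lt_succ_iff.1 (Finset.mem_range.1 hk))))
    fun j x hx => hasDerivAt_sum_sigRev_take_mul P w hx (fun k hk => hb k hk j x hx) (hbn x)
  rw [hconst, Finset.sum_eq_single 0]
  · simp [sigRev]
  · intro k hk hk0
    obtain ⟨k, rfl⟩ := Nat.exists_eq_succ_of_ne_zero hk0
    rw [reverse_take_succ w (Nat.lt_of_succ_lt_succ (Finset.mem_range.1 hk)), sigRev_zero,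
      counit, zero_mul]
  · simp

theorem sigFrom_zero (P : PiecewiseC1 F T) (w : Word α) :
    sigFrom F T w 0 = sigRev F w.reverse T := by
  have h := sum_sigRev_take_mul_eq P w (fun k => sigFrom F T (w.drop k))
    (fun k _ => continuousOn_sigFrom P _)
    (fun k hk j x hx => by
      simp only [List.drop_eq_getElem_cons hk]
      exact hasDerivAt_sigFrom_cons P _ _ hx)
    (fun x => by simp only [List.drop_length]; exact hasDerivAt_const x 1)
  rw [List.drop_zero] at h
  rw [← h, Finset.sum_range_succ, Finset.sum_eq_zero, List.take_length, List.drop_length]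
  · simp [sigFrom]
  · intro k hk
    rw [List.drop_eq_getElem_cons (Finset.mem_range.1 hk), sigFrom_cons_self, mul_zero]

theorem sum_sigRev_take_mul_neg_one_pow_mul_sigRev_drop (P : PiecewiseC1 F T) (w : Word α) :
    ∑ k ∈ Finset.range (w.length + 1),
      sigRev F (w.take k).reverse T * ((-1) ^ (w.length - k) * sigRev F (w.drop k) T)
      = counit w := by
  rw [sum_sigRev_take_mul_eq P w (fun k t => (-1) ^ (w.length - k) * sigRev F (w.drop k) t)
    (fun k _ => continuousOn_const.mul (continuousOn_sigRev P _))
    (fun k hk j x hx => by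
      simp only [List.drop_eq_getElem_cons hk]
      refine ((hasDerivAt_sigRev_cons P _ _ hx).const_mul
        ((-1 : ℝ) ^ (w.length - k))).congr_deriv ?_
      rw [show w.length - k = w.length - (k + 1) + 1 by omega, pow_succ]
      ring)
    (fun x => by
      simp only [List.drop_length, Nat.sub_self]
      exact hasDerivAt_const x ((-1 : ℝ) ^ 0 * 1))]
  rw [List.drop_zero, sigRev_zero]
  cases w <;> simp [counit]

end Telescoping

section Concatenation

variable {X Y : RawPath α}

lemma deriv_concat_of_lt {r : ℝ} (hr : r < X.T) (i : α) :
    deriv (fun u => (concat X Y).toFun u i) r = deriv (fun u => X.toFun u i) r :=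
  Filter.EventuallyEq.deriv_eq <| by
    filter_upwards [Iio_mem_nhds hr] with v hv using if_pos hv.le

lemma deriv_concat_add {u : ℝ} (hu : 0 < u) (i : α) :
    deriv (fun v => (concat X Y).toFun v i) (X.T + u) = deriv (fun v => Y.toFun v i) u := by
  have hshift : deriv (fun v => (concat X Y).toFun v i) (X.T + u)
      = deriv (fun v => Y.toFun (v - X.T) i + (X.toFun X.T i - Y.toFun 0 i)) (X.T + u) := by
    refine Filter.EventuallyEq.deriv_eq ?_
    filter_upwards [Ioi_mem_nhds (lt_add_of_pos_right X.T hu)] with v hv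
    simp only [concat, if_neg (not_le.2 (mem_Ioi.1 hv))]
    ring
  rw [hshift, deriv_add_const]
  simpa using deriv_comp_sub_const (fun z => Y.toFun z i) X.T (X.T + u)

lemma sigRev_concat_of_mem_Icc :
    ∀ (l : Word α) {s : ℝ}, s ∈ Icc 0 X.T → sigRev (concat X Y).toFun l s = sigRev X.toFun l s
  | [], _, _ => rfl
  | i :: l, s, hs => by
    refine intervalIntegral.integral_congr_ae ?_
    filter_upwards [(countable_singleton X.T).ae_notMem volume] with r hr hrs
    rw [uIoc_of_le hs.1] at hrs
    have hrX : r < X.T := lt_of_le_of_ne (hrs.2.trans hs.2) hr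
    rw [sigRev_concat_of_mem_Icc l ⟨hrs.1.le, hrX.le⟩, deriv_concat_of_lt hrX i]

/-- Chen's identity. -/
lemma sigRev_concat_add (PX : PiecewiseC1 X.toFun X.T) (PY : PiecewiseC1 Y.toFun Y.T)
    (PZ : PiecewiseC1 (concat X Y).toFun (X.T + Y.T)) :
    ∀ (l : Word α) {t : ℝ}, t ∈ Icc 0 Y.T →
      sigRev (concat X Y).toFun l (X.T + t) =
        ∑ k ∈ Finset.range (l.length + 1),
          sigRev Y.toFun (l.take k) t * sigRev X.toFun (l.drop k) X.T
  | [], _, _ => by simp [sigRev]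
  | i :: l, t, ht => by
    have hX : X.T ∈ Icc (0 : ℝ) (X.T + Y.T) := ⟨PX.nonneg, by linarith [PY.nonneg]⟩
    have hpc := PZ.pieceContinuous_deriv i |>.continuousOn_mul (continuousOn_sigRev PZ l)
    have hY (k : ℕ) : IntervalIntegrable
        (fun u => sigRev Y.toFun (l.take k) u * deriv (fun v => Y.toFun v i) u) volume 0 t :=
      (PY.pieceContinuous_deriv i |>.continuousOn_mul (continuousOn_sigRev PY _)).intervalIntegrable
        (left_mem_Icc.2 PY.nonneg) ht
    have hlater : ∫ s in X.T..X.T + t,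
        sigRev (concat X Y).toFun l s * deriv (fun v => (concat X Y).toFun v i) s
        = ∑ k ∈ Finset.range (l.length + 1),
            sigRev Y.toFun (i :: l.take k) t * sigRev X.toFun (l.drop k) X.T := by
      calc _ = ∫ u in (0 : ℝ)..t, sigRev (concat X Y).toFun l (X.T + u)
              * deriv (fun v => (concat X Y).toFun v i) (X.T + u) := by
            simpa using (intervalIntegral.integral_comp_add_left (fun s =>
              sigRev (concat X Y).toFun l s * deriv (fun v => (concat X Y).toFun v i) s) X.T
              (a := 0) (b := t)).symm
        _ = ∫ u in (0 : ℝ)..t, ∑ k ∈ Finset.range (l.length + 1),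
              sigRev Y.toFun (l.take k) u * deriv (fun v => Y.toFun v i) u
                * sigRev X.toFun (l.drop k) X.T := by
            refine intervalIntegral.integral_congr_ae (Eventually.of_forall fun u hu => ?_)
            rw [uIoc_of_le ht.1] at hu
            rw [sigRev_concat_add PX PY PZ l ⟨hu.1.le, hu.2.trans ht.2⟩, deriv_concat_add hu.1 i,
              Finset.sum_mul]
            exact Finset.sum_congr rfl fun k _ => by ring
        _ = _ := by
            rw [intervalIntegral.integral_finsetSum fun k _ => (hY k).mul_const _]
            exact Finset.sum_congr rfl fun k _ => intervalIntegral.integral_mul_const _ _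
    rw [sigRev_cons_s19, ← intervalIntegral.integral_add_adjacent_intervals
      (hpc.intervalIntegrable (left_mem_Icc.2 PZ.nonneg) hX)
      (hpc.intervalIntegrable hX ⟨by linarith [PX.nonneg, ht.1], by linarith [ht.2]⟩),
      ← sigRev_cons_s19, sigRev_concat_of_mem_Icc _ (right_mem_Icc.2 PX.nonneg), hlater,
      List.length_cons, Finset.sum_range_succ' _ (l.length + 1)]
    simp [sigRev, add_comm]

lemma sig_concat_s19 (PX : PiecewiseC1 X.toFun X.T) (PY : PiecewiseC1 Y.toFun Y.T)
    (PZ : PiecewiseC1 (concat X Y).toFun (X.T + Y.T)) :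
    sig (concat X Y) = leftConv (sig X) (sig Y) := by
  ext w
  rw [leftConv_apply, sig, sigUpTo, show (concat X Y).T = X.T + Y.T from rfl,
    sigRev_concat_add PX PY PZ w.reverse (right_mem_Icc.2 PY.nonneg), List.length_reverse,
    ← Finset.sum_range_reflect]
  refine Finset.sum_congr rfl fun j hj => ?_
  rw [Finset.mem_range] at hj
  rw [show w.length + 1 - 1 - j = w.length - j by omega, mul_comm, sig, sigUpTo, sig, sigUpTo,
    List.reverse_take, List.reverse_drop]

end Concatenation

section TimeReversal

lemma isPath_timeRev {X : RawPath α} (h : IsPath X) : IsPath (timeRev X) := by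
  obtain ⟨hT, hcont, n, τ, hmono, h0, hlast, hsm⟩ := h
  refine ⟨hT, fun i => ?_, n, fun j => X.T - τ j.rev, fun a b hab => ?_, ?_, ?_, fun k i => ?_⟩
  · refine (hcont i).comp (continuous_const.sub continuous_id).continuousOn fun t ht => ?_
    exact ⟨sub_nonneg.2 ht.2, sub_le_self _ ht.1⟩
  · linarith [hmono (Fin.rev_lt_rev.2 hab)]
  · simp [hlast]
  · simp [h0, timeRev]
  · dsimp only
    rw [Fin.rev_castSucc, Fin.rev_succ]
    refine (hsm k.rev i).comp (contDiff_const.sub contDiff_id).contDiffOn fun t ht => ?_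
    exact ⟨by linarith [ht.2], by linarith [ht.1]⟩

variable {X : RawPath α}

lemma sig_timeRev (P : PiecewiseC1 X.toFun X.T) (w : Word α) :
    sig (timeRev X) w = (-1) ^ w.length * sigRev X.toFun w X.T := by
  simp only [sig, sigUpTo, timeRev]
  rw [sigRev_timeRev, sub_self, sigFrom_zero P, List.reverse_reverse, List.length_reverse]

lemma leftConv_sig_sig_timeRev (P : PiecewiseC1 X.toFun X.T) :
    leftConv (sig X) (sig (timeRev X)) = counit := by
  ext w
  rw [leftConv_apply, ← sum_sigRev_take_mul_neg_one_pow_mul_sigRev_drop P w]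
  refine Finset.sum_congr rfl fun k _ => ?_
  rw [sig_timeRev P, List.length_drop]
  rfl

end TimeReversal

/-- A path variety closed under concatenation is closed under time
reversal: every algebraic subsemigroup of paths is an algebraic subgroup. -/
theorem statement19 {d : ℕ} (W : Set (TA (Fin d)))
    (hconc : ∀ X Y : RawPath (Fin d), X ∈ V W → Y ∈ V W → concat X Y ∈ V W) :
    ∀ X ∈ V W, timeRev X ∈ V W := by
  intro X hX
  have P := hX.1.piecewiseC1
  refine ⟨isPath_timeRev hX.1, fun x hx => ?_⟩
  have hsplit : leftConv (sig X) = 1 + leftConv (sig X - counit) := by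
    rw [← leftConv_counit, ← leftConv_add, add_sub_cancel]
  have hpow : ∀ m, (concat X)^[m] X ∈ V W ∧
      sig ((concat X)^[m] X) = (leftConv (sig X) ^ (m + 1)) counit := by
    intro m
    induction m with
    | zero => exact ⟨hX, (leftConv_apply_counit _).symm⟩
    | succ m ih =>
      have hmem := hconc X _ hX ih.1
      rw [Function.iterate_succ_apply']
      refine ⟨hmem, ?_⟩
      rw [sig_concat_s19 P ih.1.1.piecewiseC1 hmem.1.piecewiseC1, ih.2, pow_succ' _ (m + 1)]
      rfl
  rw [pair_eq_pairF]
  refine pairF_eq_zero_of_forall_pow_eq_zero (A := sig X - counit)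
    (by simp [sig, sigUpTo, sigRev, counit]) (hsplit ▸ leftConv_sig_sig_timeRev P) fun n hn => ?_
  obtain ⟨m, rfl⟩ := Nat.exists_eq_add_of_le' hn
  rw [← hsplit, ← (hpow m).2, ← pair_eq_pairF]
  exact (hpow m).1.2 x hx

end PathVarieties
end
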